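/- With Q_n(x,t) = Γ_n(x, -t, -2!t, ..., -(n-1)!t), one has Q_n(x,t) = (-1)^n n! L_n^{(t-n)}(x+t), where L_n^{(α)} denotes the generalized Laguerre polynomial. -/

import Mathlib

/-- Complete Bell polynomials via the standard recurrence (equivalent to the
exponential formula). -/
noncomputable def bellΓ (x : ℕ → ℝ) : ℕ → ℝ
  | 0 => 1
  | n + 1 => ∑ j ∈ (Finset.range (n + 1)).attach,
      (n.choose j.1 : ℝ) * bellΓ x j.1 * x (n + 1 - j.1)
  decreasing_by exact Finset.mem_range.mp j.2

/-- `Q_n(x,t) = Γ_n(x, -1!t, -2!t, …, -(n-1)!t)`. -/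
noncomputable def Q (x t : ℝ) (n : ℕ) : ℝ :=
  bellΓ (fun k => if k = 1 then x else -((k - 1).factorial : ℝ) * t) n

/-- Generalized Laguerre polynomial `L_n^{(α)}(x) = ∑_{k=0}^n (-1)^k/k! ·
binom(n+α, n-k) · x^k`, where `binom(n+α, n-k) = ∏_{i=1}^{n-k} (α+k+i)/i`. -/
noncomputable def laguerre (n : ℕ) (α x : ℝ) : ℝ :=
  ∑ k ∈ Finset.range (n + 1),
    (-1 : ℝ) ^ k / k.factorial *
      (∏ i ∈ Finset.range (n - k), (α + k + 1 + i) / (i + 1)) * x ^ k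

/-!
The Bell sequence `Γ_n(x_1, x_2, …)` is `n!` times the coefficients of the power series
`F = exp G`, `G = ∑ x_k w^k / k!`, and `F` is the unique series with `F(0) = 1` and `F' = G' F`
(the Bell recurrence is this differential equation read off coefficientwise). For
`x_1 = x`, `x_k = -(k-1)! t` one has `G' = (x + t) - t/(1 - w)`, which is also the logarithmic
derivative of `e^{(x+t)w} (1 - w)^t`. Hence `F = e^{(x+t)w} (1 - w)^t`, and the Cauchy product of
`e^{yw}` with the binomial series of `(1 - w)^t` has coefficients `(-1)^n L_n^{(t-n)}(y)`.
-/

open PowerSeries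
open Finset hiding mk
open scoped Nat

namespace PowerSeries

theorem eq_of_derivative_eq_mul {K : Type*} [Field K] [CharZero K] {f g h : K⟦X⟧}
    (hf : d⁄dX K f = h * f) (hg : d⁄dX K g = h * g) (hg₀ : constantCoeff g ≠ 0)
    (h₀ : constantCoeff f = constantCoeff g) : f = g := by
  have hinv : g⁻¹ * g = 1 := PowerSeries.inv_mul_cancel g hg₀
  have hquot : f * g⁻¹ = 1 := by
    refine derivative.ext ?_ (by simp [h₀, mul_inv_cancel₀ hg₀])
    rw [Derivation.leibniz, derivative_inv', hf, hg, derivative_one]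
    linear_combination (-(f * h * g⁻¹)) * hinv
  calc f = f * g⁻¹ * g := by rw [mul_assoc, hinv, mul_one]
    _ = g := by rw [hquot, one_mul]

theorem rescale_C {R : Type*} [CommSemiring R] (a r : R) : rescale a (C r) = C r := by
  ext n
  cases n <;> simp [coeff_C]

theorem derivative_rescale {R : Type*} [CommRing R] (a : R) (f : R⟦X⟧) :
    d⁄dX R (rescale a f) = C a * rescale a (d⁄dX R f) := by
  ext n
  simp only [coeff_derivative, coeff_rescale, coeff_C_mul, pow_succ]
  ring

theorem one_add_X_mul_derivative_binomialSeries {R : Type*} [CommRing R] [BinomialRing R]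
    (r : R) :
    (1 + X) * d⁄dX R (binomialSeries R r) = C r * binomialSeries R r := by
  ext n
  cases n with
  | zero =>
    simp only [add_mul, one_mul, map_add, coeff_zero_X_mul, coeff_derivative, coeff_C_mul,
      binomialSeries_coeff]
    simp
  | succ n =>
    have hsucc := Ring.choose_smul_choose r (Nat.le_add_right (n + 1) 1)
    rw [Nat.choose_succ_self_right, Nat.add_sub_cancel_left, Ring.choose_one_right,
      nsmul_eq_mul] at hsucc
    simp only [add_mul, one_mul, map_add, coeff_succ_X_mul, coeff_derivative, coeff_C_mul,
      binomialSeries_coeff, smul_eq_mul, mul_one]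
    push_cast at hsucc ⊢
    linear_combination hsucc

theorem derivative_rescale_neg_one_binomialSeries {R : Type*} [CommRing R] [BinomialRing R]
    (r : R) :
    d⁄dX R (rescale (-1) (binomialSeries R r)) =
      -(C r * mk 1 * rescale (-1) (binomialSeries R r)) := by
  have h := congrArg (rescale (-1 : R)) (one_add_X_mul_derivative_binomialSeries r)
  rw [map_mul, map_mul, map_add, map_one, rescale_neg_one_X, rescale_C, ← sub_eq_add_neg] at h
  -- `mk 1 = (1 - X)⁻¹`
  rw [derivative_rescale, ← one_mul (C (-1 : R) * _), ← mk_one_mul_one_sub_eq_one R, mul_assoc,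
    ← mul_assoc (1 - X), mul_comm (1 - X), mul_assoc, h]
  simp only [map_neg, map_one]
  ring

end PowerSeries

theorem Polynomial.ascPochhammer_eval_eq_prod_range {R : Type*} [CommSemiring R] (n : ℕ) (r : R) :
    (ascPochhammer R n).eval r = ∏ j ∈ range n, (r + j) := by
  induction n with
  | zero => simp
  | succ n ih => rw [ascPochhammer_succ_eval, ih, prod_range_succ]

theorem Ring.choose_eq_prod_range_div {K : Type*} [Field K] [CharZero K] (r : K) (n : ℕ) :
    Ring.choose r n = ∏ j ∈ range n, (r - n + 1 + j) / (j + 1) := by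
  rw [Ring.choose_eq_smul, Polynomial.descPochhammer_smeval_eq_ascPochhammer,
    Polynomial.ascPochhammer_smeval_eq_eval, Polynomial.ascPochhammer_eval_eq_prod_range,
    prod_div_distrib, smul_eq_mul, inv_mul_eq_div]
  congr 1
  exact_mod_cast (prod_range_add_one_eq_factorial n).symm

theorem bellΓ_succ (x : ℕ → ℝ) (n : ℕ) :
    bellΓ x (n + 1) =
      ∑ j ∈ range (n + 1), (n.choose j : ℝ) * bellΓ x j * x (n + 1 - j) := by
  rw [bellΓ]
  exact sum_attach (range (n + 1)) fun j => (n.choose j : ℝ) * bellΓ x j * x (n + 1 - j)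

noncomputable def bellEGF (x : ℕ → ℝ) : ℝ⟦X⟧ :=
  mk fun n => bellΓ x n / n !

theorem constantCoeff_bellEGF (x : ℕ → ℝ) : constantCoeff (bellEGF x) = 1 := by
  rw [← coeff_zero_eq_constantCoeff_apply, bellEGF, coeff_mk, bellΓ]
  simp

theorem derivative_bellEGF (x : ℕ → ℝ) :
    d⁄dX ℝ (bellEGF x) = mk (fun k => x (k + 1) / k !) * bellEGF x := by
  ext n
  rw [coeff_derivative, mul_comm (mk _), coeff_mul,
    Finset.Nat.sum_antidiagonal_eq_sum_range_succ_mk]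
  have hfac : ((n + 1)! : ℝ) = (n + 1) * n ! := by push_cast [Nat.factorial_succ]; ring
  simp only [bellEGF, coeff_mk, hfac, bellΓ_succ]
  rw [div_mul_eq_mul_div, mul_comm _ ((n : ℝ) + 1), mul_div_mul_left _ _ (by positivity),
    sum_div]
  refine sum_congr rfl fun j hj => ?_
  have hjn : j ≤ n := mem_range_succ_iff.mp hj
  rw [Nat.cast_choose ℝ hjn, show n + 1 - j = n - j + 1 by omega]
  field_simp

theorem bellΓ_eq_factorial_mul_coeff {x : ℕ → ℝ} {F : ℝ⟦X⟧} (hF₀ : constantCoeff F = 1)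
    (hF : d⁄dX ℝ F = mk (fun k => x (k + 1) / k !) * F) (n : ℕ) :
    bellΓ x n = n ! * coeff n F := by
  rw [← eq_of_derivative_eq_mul (derivative_bellEGF x) hF (by simp [hF₀])
    (by rw [constantCoeff_bellEGF, hF₀]), bellEGF, coeff_mk]
  field_simp

noncomputable def laguerreSeries (y t : ℝ) : ℝ⟦X⟧ :=
  rescale y (exp ℝ) * rescale (-1) (binomialSeries ℝ t)

theorem constantCoeff_laguerreSeries (y t : ℝ) : constantCoeff (laguerreSeries y t) = 1 := by
  rw [laguerreSeries, map_mul, ← coeff_zero_eq_constantCoeff_apply,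
    ← coeff_zero_eq_constantCoeff_apply, coeff_rescale, coeff_rescale]
  simp

theorem derivative_laguerreSeries (y t : ℝ) :
    d⁄dX ℝ (laguerreSeries y t) = (C y - C t * mk 1) * laguerreSeries y t := by
  rw [laguerreSeries, Derivation.leibniz, derivative_rescale_neg_one_binomialSeries,
    derivative_rescale, derivative_exp, smul_eq_mul, smul_eq_mul]
  ring

theorem coeff_laguerreSeries (y t : ℝ) (n : ℕ) :
    coeff n (laguerreSeries y t) = (-1) ^ n * laguerre n (t - n) y := by
  rw [laguerreSeries, coeff_mul, Finset.Nat.sum_antidiagonal_eq_sum_range_succ_mk, laguerre,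
    mul_sum]
  refine sum_congr rfl fun k hk => ?_
  have hkn : k ≤ n := mem_range_succ_iff.mp hk
  have hchoose :
      Ring.choose t (n - k) = ∏ i ∈ range (n - k), (t - n + k + 1 + i) / (i + 1) := by
    rw [Ring.choose_eq_prod_range_div, Nat.cast_sub hkn]
    exact prod_congr rfl fun i _ => by ring
  have hsign : (-1 : ℝ) ^ n = (-1) ^ (n - k) * (-1) ^ k := by
    rw [← pow_add, Nat.sub_add_cancel hkn]
  have hsq : (-1 : ℝ) ^ k * (-1) ^ k = 1 := by rw [← mul_pow]; simp
  simp only [coeff_rescale, coeff_exp, binomialSeries_coeff, hchoose, hsign, smul_eq_mul, mul_one,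
    one_div, map_inv₀, map_natCast]
  linear_combination (-(y ^ k / k ! * (-1) ^ (n - k) *
    ∏ i ∈ range (n - k), (t - n + k + 1 + i) / (i + 1))) * hsq

theorem Q_gamma_eq_laguerre (x t : ℝ) (n : ℕ) :
    Q x t n = (-1 : ℝ) ^ n * n.factorial * laguerre n (t - n) (x + t) := by
  have hlog : mk (fun k => (if k + 1 = 1 then x else -((k + 1 - 1)! : ℝ) * t) / k !) =
      C (x + t) - C t * mk 1 := by
    ext (_ | k)
    · simp
    · simp
      field_simp
  rw [Q, bellΓ_eq_factorial_mul_coeff (constantCoeff_laguerreSeries (x + t) t)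
    (by rw [derivative_laguerreSeries, hlog]), coeff_laguerreSeries]
  ring
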